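/- Let Q be a random variable with finite second moment and let Q_ℓ be its level-ℓ approximation. Suppose there exist positive constants α, β, γ, c₁, c₂, c₃ with α ≥ min(β,γ)/2 such that for all levels ℓ: |E[Q_ℓ − Q]| ≤ c₁·2^(−αℓ), the variance V_ℓ of a single sample of Y_ℓ = Q_ℓ − Q_{ℓ−1} satisfies V_ℓ ≤ c₂·2^(−βℓ), and the cost per sample C_ℓ satisfies C_ℓ ≤ c₃·2^(γℓ). Then there exists c₄ > 0 such that for all ε < e^{−1} there exist L and sample numbers N_ℓ for which the multilevel Monte Carlo estimator has mean square error at most ε², with expected total cost bounded by c₄ε^{−2} if β > γ, by c₄ε^{−2}(log ε)² if β = γ, and by c₄ε^{−2−(γ−β)/α} if β < γ. -/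

import Mathlib

open MeasureTheory ProbabilityTheory Real Finset

/-!
Balance the squared bias against the sampling variance, each at `ε² / 2`. The finest level `L`
is chosen with `c₁ 2^{-αL} ≤ ε / √2` but still `2^{αL} ≲ ε⁻¹`, so that `L ≲ |log ε|`. Given `L`, the
sample numbers `N_ℓ ∝ √(V_ℓ / C_ℓ)` (rounded up) minimise the cost `∑ N_ℓ C_ℓ` subject to
`∑ V_ℓ / N_ℓ ≤ ε² / 2`, which gives cost `≲ ε⁻² (∑_ℓ √(V_ℓ C_ℓ))² + ∑_ℓ C_ℓ`. With
`√(V_ℓ C_ℓ) ≲ 2^{(γ-β)ℓ/2}`, the first term is a geometric sum that is bounded, linear in `L`,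
or dominated by its last term according as `β > γ`, `β = γ` or `β < γ`; the second term is
`≲ 2^{γL} ≲ ε^{-γ/α}`, which `α ≥ min(β, γ) / 2` keeps below the claimed rate.
-/

theorem exists_sample_allocation {ι : Type*} (s : Finset ι) (v c : ι → ℝ)
    (hv : ∀ i ∈ s, 0 < v i) (hc : ∀ i ∈ s, 0 < c i) {δ : ℝ} (hδ : 0 < δ) :
    ∃ N : ι → ℕ, (∀ i ∈ s, 0 < N i) ∧ ∑ i ∈ s, v i / N i ≤ δ ∧
      ∑ i ∈ s, (N i : ℝ) * c i ≤ (∑ i ∈ s, √(v i * c i)) ^ 2 / δ + ∑ i ∈ s, c i := by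
  set S := ∑ i ∈ s, √(v i * c i)
  have hw : ∀ i ∈ s, 0 < √(v i * c i) := fun i hi => sqrt_pos.2 (mul_pos (hv i hi) (hc i hi))
  have hS : ∀ i ∈ s, 0 < S := fun i hi =>
    (hw i hi).trans_le (single_le_sum (fun j _ => sqrt_nonneg (v j * c j)) hi)
  set n : ι → ℝ := fun i => S * √(v i * c i) / (δ * c i)
  have hn : ∀ i ∈ s, 0 < n i := fun i hi =>
    div_pos (mul_pos (hS i hi) (hw i hi)) (mul_pos hδ (hc i hi))
  refine ⟨fun i => ⌈n i⌉₊, fun i hi => Nat.ceil_pos.2 (hn i hi), ?_, ?_⟩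
  · calc ∑ i ∈ s, v i / ⌈n i⌉₊ ≤ ∑ i ∈ s, v i / n i :=
          sum_le_sum fun i hi => div_le_div_of_nonneg_left (hv i hi).le (hn i hi) (Nat.le_ceil _)
      _ = ∑ i ∈ s, δ / S * √(v i * c i) := sum_congr rfl fun i hi => by
          have hsq : √(v i * c i) ^ 2 = v i * c i := sq_sqrt (mul_pos (hv i hi) (hc i hi)).le
          have := hw i hi; have := hc i hi; have := hS i hi
          simp only [n, div_div_eq_mul_div]
          field_simp
          linear_combination -hsq
      _ ≤ δ := by
          obtain rfl | ⟨i, hi⟩ := s.eq_empty_or_nonempty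
          · simpa using hδ.le
          · rw [← mul_sum, div_mul_cancel₀ _ (hS i hi).ne']
  · calc ∑ i ∈ s, (⌈n i⌉₊ : ℝ) * c i ≤ ∑ i ∈ s, (S / δ * √(v i * c i) + c i) :=
          sum_le_sum fun i hi => by
            have hceil := Nat.ceil_lt_add_one (hn i hi).le
            have hnc : n i * c i = S / δ * √(v i * c i) := by
              have := hc i hi; simp only [n]; field_simp
            nlinarith [hc i hi]
      _ = S ^ 2 / δ + ∑ i ∈ s, c i := by rw [sum_add_distrib, ← mul_sum]; ring

theorem exists_rpow_two_mul_natCast_mem_Icc {α y : ℝ} (hα : 0 < α) (hy : 1 ≤ y) :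
    ∃ L : ℕ, 1 ≤ L ∧ y ≤ (2 : ℝ) ^ (α * L) ∧ (2 : ℝ) ^ (α * L) ≤ 2 ^ α * y := by
  obtain ⟨n, hn, hn1⟩ := exists_nat_pow_near hy (one_lt_rpow one_lt_two hα)
  refine ⟨n + 1, n.succ_pos, ?_, ?_⟩ <;> rw [rpow_mul_natCast zero_le_two]
  · exact hn1.le
  · rw [pow_succ']
    exact mul_le_mul_of_nonneg_left hn (by positivity)

theorem one_lt_neg_log_of_lt_exp_neg_one {ε : ℝ} (hε : 0 < ε) (hεe : ε < exp (-1)) :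
    1 < -log ε := by
  have := log_lt_log hε hεe
  rw [log_exp] at this
  linarith

section LevelBounds

variable {α D ε : ℝ} {L : ℕ}

theorem rpow_two_mul_natCast_le (hα : 0 < α) (hD : 0 ≤ D) (hε : 0 < ε)
    (hL : (2 : ℝ) ^ (α * L) ≤ D / ε) {θ : ℝ} (hθ : 0 ≤ θ) :
    (2 : ℝ) ^ (θ * L) ≤ D ^ (θ / α) * ε ^ (-(θ / α)) :=
  calc (2 : ℝ) ^ (θ * L) = ((2 : ℝ) ^ (α * L)) ^ (θ / α) := by
        rw [← rpow_mul zero_le_two]; congr 1; field_simp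
    _ ≤ (D / ε) ^ (θ / α) := rpow_le_rpow (by positivity) hL (by positivity)
    _ = D ^ (θ / α) * ε ^ (-(θ / α)) := by
        rw [div_rpow hD hε.le, rpow_neg hε.le, div_eq_mul_inv]

theorem natCast_le_mul_neg_log (hα : 0 < α) (hD : 1 ≤ D) (hε : 0 < ε) (hεe : ε < exp (-1))
    (hL : (2 : ℝ) ^ (α * L) ≤ D / ε) :
    (L : ℝ) ≤ (log D + 1) / (α * log 2) * (-log ε) := by
  have hlogε := one_lt_neg_log_of_lt_exp_neg_one hε hεe
  have hlogD : 0 ≤ log D := log_nonneg hD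
  have hlog : α * L * log 2 ≤ log D - log ε := by
    have := log_le_log (by positivity) hL
    rwa [log_rpow two_pos, log_div (by positivity) hε.ne'] at this
  rw [div_mul_eq_mul_div, le_div_iff₀ (mul_pos hα (log_pos one_lt_two))]
  nlinarith

end LevelBounds

theorem geom_sum_Icc_le_of_lt_one {K : Type*} [Field K] [LinearOrder K] [IsStrictOrderedRing K]
    {x : K} (h0 : 0 ≤ x) (h1 : x < 1) (L : ℕ) :
    ∑ ℓ ∈ Icc 1 L, x ^ ℓ ≤ x / (1 - x) := by
  simpa [← Ico_add_one_right_eq_Icc] using geom_sum_Ico_le_of_lt_one (m := 1) (n := L + 1) h0 h1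

theorem geom_sum_Icc_le_of_one_lt {K : Type*} [Field K] [LinearOrder K] [IsStrictOrderedRing K]
    {x : K} (h1 : 1 < x) (L : ℕ) :
    ∑ ℓ ∈ Icc 1 L, x ^ ℓ ≤ x / (x - 1) * x ^ L := by
  rw [← Ico_add_one_right_eq_Icc, geom_sum_Ico h1.ne' (by omega), div_mul_eq_mul_div, pow_succ]
  exact div_le_div_of_nonneg_right (by nlinarith) (sub_pos.2 h1).le

noncomputable def mlmcCostRate (α β γ ε : ℝ) : ℝ :=
  if β > γ then ε ^ (-2 : ℝ) else if β = γ then ε ^ (-2 : ℝ) * log ε ^ 2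
  else ε ^ (-2 - (γ - β) / α)

section CostRate

variable {α β γ D : ℝ}

theorem rpow_neg_div_le_mlmcCostRate (hα : 0 < α) (hαβγ : min β γ / 2 ≤ α) {ε : ℝ}
    (hε : 0 < ε) (hεe : ε < exp (-1)) : ε ^ (-(γ / α)) ≤ mlmcCostRate α β γ ε := by
  have hε1 : ε ≤ 1 := by linarith [exp_neg_one_lt_half]
  unfold mlmcCostRate
  split_ifs with hgt heq
  · rw [min_eq_right hgt.le] at hαβγ
    exact rpow_le_rpow_of_exponent_ge hε hε1 (by rw [neg_le_neg_iff, div_le_iff₀ hα]; linarith)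
  · subst heq
    rw [min_self] at hαβγ
    have hlog : 1 ≤ log ε ^ 2 := by nlinarith [one_lt_neg_log_of_lt_exp_neg_one hε hεe]
    calc ε ^ (-(β / α)) ≤ ε ^ (-2 : ℝ) :=
          rpow_le_rpow_of_exponent_ge hε hε1 (by rw [neg_le_neg_iff, div_le_iff₀ hα]; linarith)
      _ ≤ ε ^ (-2 : ℝ) * log ε ^ 2 := le_mul_of_one_le_right (by positivity) hlog
  · rw [min_eq_left (not_lt.1 hgt)] at hαβγ
    refine rpow_le_rpow_of_exponent_ge hε hε1 ?_
    have : β / α ≤ 2 := by rw [div_le_iff₀ hα]; linarith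
    rw [sub_div]
    linarith

theorem exists_sq_geom_sum_mul_le_mlmcCostRate (hα : 0 < α) (hD : 1 ≤ D) :
    ∃ K > 0, ∀ ε, 0 < ε → ε < exp (-1) → ∀ L : ℕ, (2 : ℝ) ^ (α * L) ≤ D / ε →
      (∑ ℓ ∈ Icc 1 L, ((2 : ℝ) ^ ((γ - β) / 2)) ^ ℓ) ^ 2 * ε ^ (-2 : ℝ) ≤
        K * mlmcCostRate α β γ ε := by
  set r := (2 : ℝ) ^ ((γ - β) / 2)
  have hr : 0 < r := by positivity
  rcases lt_trichotomy γ β with hgt | rfl | hlt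
  · have hr1 : r < 1 := rpow_lt_one_of_one_lt_of_neg one_lt_two (by linarith)
    refine ⟨(r / (1 - r)) ^ 2, by have := sub_pos.2 hr1; positivity, fun ε hε _ L _ => ?_⟩
    rw [mlmcCostRate, if_pos hgt]
    have hsum := geom_sum_Icc_le_of_lt_one hr.le hr1 L
    gcongr
  · have hr1 : r = 1 := by simp [r]
    set B := (log D + 1) / (α * log 2)
    refine ⟨B ^ 2, by have := log_nonneg hD; have := log_pos one_lt_two; positivity,
      fun ε hε hεe L hL => ?_⟩
    rw [mlmcCostRate, if_neg (lt_irrefl γ), if_pos rfl, hr1]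
    have hL := natCast_le_mul_neg_log hα hD hε hεe hL
    simp only [one_pow, sum_const, Nat.card_Icc, add_tsub_cancel_right, nsmul_eq_mul, mul_one]
    have hLsq : (L : ℝ) ^ 2 ≤ B ^ 2 * log ε ^ 2 := by
      rw [← neg_sq (log ε), ← mul_pow]
      exact pow_le_pow_left₀ (Nat.cast_nonneg L) hL 2
    calc (L : ℝ) ^ 2 * ε ^ (-2 : ℝ) ≤ B ^ 2 * log ε ^ 2 * ε ^ (-2 : ℝ) := by gcongr
      _ = B ^ 2 * (ε ^ (-2 : ℝ) * log ε ^ 2) := by ring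
  · have hr1 : 1 < r := one_lt_rpow one_lt_two (by linarith)
    set a := (γ - β) / α
    refine ⟨(r / (r - 1)) ^ 2 * D ^ a, by have := sub_pos.2 hr1; positivity,
      fun ε hε _ L hL => ?_⟩
    rw [mlmcCostRate, if_neg (by linarith), if_neg hlt.ne]
    have hrL : (r ^ L) ^ 2 ≤ D ^ a * ε ^ (-a) := by
      rw [← rpow_mul_natCast zero_le_two, ← rpow_natCast, ← rpow_mul zero_le_two]
      convert rpow_two_mul_natCast_le hα (by linarith) hε hL (θ := γ - β) (by linarith) using 2
      push_cast
      ring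
    have hsum := geom_sum_Icc_le_of_one_lt hr1 L
    calc (∑ ℓ ∈ Icc 1 L, r ^ ℓ) ^ 2 * ε ^ (-2 : ℝ)
        ≤ (r / (r - 1) * r ^ L) ^ 2 * ε ^ (-2 : ℝ) := by gcongr
      _ = (r / (r - 1)) ^ 2 * (r ^ L) ^ 2 * ε ^ (-2 : ℝ) := by ring
      _ ≤ (r / (r - 1)) ^ 2 * (D ^ a * ε ^ (-a)) * ε ^ (-2 : ℝ) := by gcongr
      _ = (r / (r - 1)) ^ 2 * D ^ a * ε ^ (-2 - a) := by
        rw [show -2 - a = -a + -2 by ring, rpow_add hε]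
        ring

theorem exists_sum_rpow_two_le_mlmcCostRate (hα : 0 < α) (hγ : 0 < γ)
    (hαβγ : min β γ / 2 ≤ α) (hD : 1 ≤ D) :
    ∃ K > 0, ∀ ε, 0 < ε → ε < exp (-1) → ∀ L : ℕ, (2 : ℝ) ^ (α * L) ≤ D / ε →
      ∑ ℓ ∈ Icc 1 L, (2 : ℝ) ^ (γ * ℓ) ≤ K * mlmcCostRate α β γ ε := by
  have hq : 1 < (2 : ℝ) ^ γ := one_lt_rpow one_lt_two hγ
  set g := (2 : ℝ) ^ γ / ((2 : ℝ) ^ γ - 1)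
  have hg : 0 < g := div_pos (by positivity) (sub_pos.2 hq)
  refine ⟨g * D ^ (γ / α), by positivity, fun ε hε hεe L hL => ?_⟩
  calc ∑ ℓ ∈ Icc 1 L, (2 : ℝ) ^ (γ * ℓ) = ∑ ℓ ∈ Icc 1 L, ((2 : ℝ) ^ γ) ^ ℓ :=
        sum_congr rfl fun ℓ _ => rpow_mul_natCast zero_le_two γ ℓ
    _ ≤ g * (2 : ℝ) ^ (γ * L) := by
        rw [rpow_mul_natCast zero_le_two]; exact geom_sum_Icc_le_of_one_lt hq L
    _ ≤ g * (D ^ (γ / α) * ε ^ (-(γ / α))) := by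
        gcongr; exact rpow_two_mul_natCast_le hα (by linarith) hε hL hγ.le
    _ ≤ g * (D ^ (γ / α) * mlmcCostRate α β γ ε) := by
        gcongr; exact rpow_neg_div_le_mlmcCostRate hα hαβγ hε hεe
    _ = g * D ^ (γ / α) * mlmcCostRate α β γ ε := by ring

end CostRate

theorem sqrt_mul_rpow_two_eq {β γ c₂ c₃ : ℝ} (hc : 0 ≤ c₂ * c₃) (ℓ : ℕ) :
    √(c₂ * (2 : ℝ) ^ (-β * ℓ) * (c₃ * (2 : ℝ) ^ (γ * ℓ))) =
      √(c₂ * c₃) * ((2 : ℝ) ^ ((γ - β) / 2)) ^ ℓ := by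
  have h : c₂ * (2 : ℝ) ^ (-β * ℓ) * (c₃ * (2 : ℝ) ^ (γ * ℓ)) =
      c₂ * c₃ * ((2 : ℝ) ^ ((γ - β) / 2 * ℓ)) ^ 2 := by
    rw [← rpow_natCast, ← rpow_mul zero_le_two, mul_mul_mul_comm, ← rpow_add two_pos]
    congr 2
    push_cast
    ring
  rw [h, sqrt_mul hc, sqrt_sq (by positivity), rpow_mul_natCast zero_le_two]

theorem exists_mlmc_levels_and_samples {α β γ c₂ c₃ : ℝ} (c₁ : ℝ) (hα : 0 < α) (hγ : 0 < γ)
    (hc₂ : 0 < c₂) (hc₃ : 0 < c₃) (hαβγ : min β γ / 2 ≤ α) :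
    ∃ c₄ > 0, ∀ ε, 0 < ε → ε < exp (-1) → ∃ (L : ℕ) (N : ℕ → ℕ),
      1 ≤ L ∧ (∀ ℓ ∈ Icc 1 L, 0 < N ℓ) ∧ c₁ * (2 : ℝ) ^ (-α * L) ≤ ε / √2 ∧
      ∑ ℓ ∈ Icc 1 L, c₂ * (2 : ℝ) ^ (-β * ℓ) / N ℓ ≤ ε ^ 2 / 2 ∧
      ∑ ℓ ∈ Icc 1 L, (N ℓ : ℝ) * (c₃ * (2 : ℝ) ^ (γ * ℓ)) ≤ c₄ * mlmcCostRate α β γ ε := by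
  set M := max 1 (c₁ * √2)
  have hD : 1 ≤ 2 ^ α * M := one_le_mul_of_one_le_of_one_le (one_le_rpow one_le_two hα.le)
    (le_max_left _ _)
  obtain ⟨K₁, hK₁, hvarcost⟩ := exists_sq_geom_sum_mul_le_mlmcCostRate (β := β) (γ := γ) hα hD
  obtain ⟨K₂, hK₂, hlevelcost⟩ := exists_sum_rpow_two_le_mlmcCostRate hα hγ hαβγ hD
  refine ⟨2 * (c₂ * c₃) * K₁ + c₃ * K₂, by positivity, fun ε hε hεe => ?_⟩
  have hMε : 1 ≤ M / ε := by
    rw [le_div_iff₀ hε, one_mul]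
    linarith [le_max_left 1 (c₁ * √2), exp_neg_one_lt_half]
  obtain ⟨L, hL1, hML, hLM⟩ := exists_rpow_two_mul_natCast_mem_Icc hα hMε
  rw [← mul_div_assoc] at hLM
  obtain ⟨N, hN, hstat, hcost⟩ := exists_sample_allocation (Icc 1 L)
    (fun ℓ => c₂ * (2 : ℝ) ^ (-β * ℓ)) (fun ℓ => c₃ * (2 : ℝ) ^ (γ * ℓ))
    (fun _ _ => by positivity) (fun _ _ => by positivity) (by positivity : 0 < ε ^ 2 / 2)
  refine ⟨L, N, hL1, hN, ?_, hstat, ?_⟩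
  · rw [neg_mul, rpow_neg zero_le_two, ← div_eq_mul_inv,
      div_le_div_iff₀ (by positivity) (by positivity)]
    rw [div_le_iff₀ hε] at hML
    linarith [le_max_right 1 (c₁ * √2)]
  · simp only [sqrt_mul_rpow_two_eq (mul_pos hc₂ hc₃).le, ← mul_sum] at hcost
    calc _ ≤ _ := hcost
      _ = 2 * (c₂ * c₃) * ((∑ ℓ ∈ Icc 1 L, ((2 : ℝ) ^ ((γ - β) / 2)) ^ ℓ) ^ 2 * ε ^ (-2 : ℝ)) +
          c₃ * ∑ ℓ ∈ Icc 1 L, (2 : ℝ) ^ (γ * ℓ) := by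
        rw [mul_pow, sq_sqrt (mul_pos hc₂ hc₃).le, rpow_neg hε.le, rpow_two]
        field_simp
      _ ≤ 2 * (c₂ * c₃) * (K₁ * mlmcCostRate α β γ ε) + c₃ * (K₂ * mlmcCostRate α β γ ε) := by
        have := hvarcost ε hε hεe L hLM
        have := hlevelcost ε hε hεe L hLM
        gcongr
      _ = (2 * (c₂ * c₃) * K₁ + c₃ * K₂) * mlmcCostRate α β γ ε := by ring

theorem mlmc_complexity_general
    {Ω : Type*} [MeasurableSpace Ω] (μ : Measure Ω)
    (Q : Ω → ℝ)
    (Ql : ℕ → Ω → ℝ)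
    (C : ℕ → ℝ)
    (α β γ c₁ c₂ c₃ : ℝ)
    (hα : 0 < α) (hγ : 0 < γ)
    (hc₂ : 0 < c₂) (hc₃ : 0 < c₃)
    (hαβγ : α ≥ min β γ / 2)
    (hbias : ∀ ℓ : ℕ, 1 ≤ ℓ → |(∫ ω, Ql ℓ ω ∂μ) - ∫ ω, Q ω ∂μ| ≤ c₁ * (2 : ℝ) ^ (-α * ℓ))
    (hvar : ∀ ℓ : ℕ, 1 ≤ ℓ →
      variance (fun ω => Ql ℓ ω - Ql (ℓ - 1) ω) μ ≤ c₂ * (2 : ℝ) ^ (-β * ℓ))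
    (hcost : ∀ ℓ : ℕ, 1 ≤ ℓ → C ℓ ≤ c₃ * (2 : ℝ) ^ (γ * ℓ)) :
    ∃ c₄ : ℝ, 0 < c₄ ∧ ∀ ε : ℝ, 0 < ε → ε < Real.exp (-1) →
      ∃ (L : ℕ) (N : ℕ → ℕ), 1 ≤ L ∧ (∀ ℓ ∈ Finset.Icc 1 L, 0 < N ℓ) ∧
        -- mean square error of the MLMC estimator: squared bias + statistical error
        ((∫ ω, Ql L ω ∂μ) - ∫ ω, Q ω ∂μ) ^ 2 +
          ∑ ℓ ∈ Finset.Icc 1 L,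
            variance (fun ω => Ql ℓ ω - Ql (ℓ - 1) ω) μ / (N ℓ : ℝ) ≤ ε ^ 2 ∧
        -- expected total cost bound
        (∑ ℓ ∈ Finset.Icc 1 L, (N ℓ : ℝ) * C ℓ) ≤
          (if β > γ then c₄ * ε ^ (-2 : ℝ)
           else if β = γ then c₄ * ε ^ (-2 : ℝ) * (Real.log ε) ^ 2
           else c₄ * ε ^ (-2 - (γ - β) / α)) := by
  obtain ⟨c₄, hc₄, hmodel⟩ := exists_mlmc_levels_and_samples (β := β) c₁ hα hγ hc₂ hc₃ hαβγ
  refine ⟨c₄, hc₄, fun ε hε hεe => ?_⟩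
  obtain ⟨L, N, hL1, hN, hbiasL, hstat, hcostL⟩ := hmodel ε hε hεe
  refine ⟨L, N, hL1, hN, ?_, ?_⟩
  · have hbias2 : ((∫ ω, Ql L ω ∂μ) - ∫ ω, Q ω ∂μ) ^ 2 ≤ ε ^ 2 / 2 := by
      rw [← sq_abs, ← sq_sqrt zero_le_two, ← div_pow]
      exact pow_le_pow_left₀ (abs_nonneg _) ((hbias L hL1).trans hbiasL) 2
    have hvarL : ∑ ℓ ∈ Icc 1 L, variance (fun ω => Ql ℓ ω - Ql (ℓ - 1) ω) μ / (N ℓ : ℝ) ≤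
        ∑ ℓ ∈ Icc 1 L, c₂ * (2 : ℝ) ^ (-β * ℓ) / N ℓ :=
      sum_le_sum fun ℓ hℓ => div_le_div_of_nonneg_right (hvar ℓ (mem_Icc.1 hℓ).1) (by positivity)
    linarith
  · calc ∑ ℓ ∈ Icc 1 L, (N ℓ : ℝ) * C ℓ ≤ ∑ ℓ ∈ Icc 1 L, (N ℓ : ℝ) * (c₃ * (2 : ℝ) ^ (γ * ℓ)) :=
          sum_le_sum fun ℓ hℓ => by gcongr; exact hcost ℓ (mem_Icc.1 hℓ).1
      _ ≤ c₄ * mlmcCostRate α β γ ε := hcostL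
      _ = _ := by unfold mlmcCostRate; split_ifs <;> ring

/-- **MLMC complexity theorem** (Giles). Let `Q` be a square-integrable random variable and
`Ql ℓ` its level-`ℓ` approximation (with `Ql 0 ≡ 0`). If the bias, the single-sample variance
of the level corrections `Yℓ = Ql ℓ - Ql (ℓ-1)` and the per-sample cost satisfy geometric
bounds with rates `α ≥ min(β,γ)/2`, then there is `c₄ > 0` such that for every tolerance
`ε < e⁻¹` one can choose a finest level `L` and per-level sample numbers `N ℓ` so that the
MLMC estimator (whose MSE, by independence of the per-level estimators, equals the squared
bias plus `∑ Vℓ/Nℓ`) has mean square error at most `ε²` and expected total cost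
`∑ Nℓ Cℓ` bounded by `c₄ε⁻²`, `c₄ε⁻²(log ε)²` or `c₄ε^(−2−(γ−β)/α)` according to the
relative size of `β` and `γ`. -/
theorem mlmc_complexity
    {Ω : Type*} [MeasurableSpace Ω] (μ : Measure Ω) [IsProbabilityMeasure μ]
    (Q : Ω → ℝ) (hQ : MemLp Q 2 μ)
    (Ql : ℕ → Ω → ℝ) (hQl0 : Ql 0 = fun _ => 0)
    (hQlL2 : ∀ ℓ, MemLp (Ql ℓ) 2 μ)
    (C : ℕ → ℝ) (hCpos : ∀ ℓ, 0 < C ℓ)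
    (α β γ c₁ c₂ c₃ : ℝ)
    (hα : 0 < α) (hβ : 0 < β) (hγ : 0 < γ)
    (hc₁ : 0 < c₁) (hc₂ : 0 < c₂) (hc₃ : 0 < c₃)
    (hαβγ : α ≥ min β γ / 2)
    (hbias : ∀ ℓ : ℕ, 1 ≤ ℓ → |(∫ ω, Ql ℓ ω ∂μ) - ∫ ω, Q ω ∂μ| ≤ c₁ * (2 : ℝ) ^ (-α * ℓ))
    (hvar : ∀ ℓ : ℕ, 1 ≤ ℓ →
      variance (fun ω => Ql ℓ ω - Ql (ℓ - 1) ω) μ ≤ c₂ * (2 : ℝ) ^ (-β * ℓ))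
    (hcost : ∀ ℓ : ℕ, 1 ≤ ℓ → C ℓ ≤ c₃ * (2 : ℝ) ^ (γ * ℓ)) :
    ∃ c₄ : ℝ, 0 < c₄ ∧ ∀ ε : ℝ, 0 < ε → ε < Real.exp (-1) →
      ∃ (L : ℕ) (N : ℕ → ℕ), 1 ≤ L ∧ (∀ ℓ ∈ Finset.Icc 1 L, 0 < N ℓ) ∧
        -- mean square error of the MLMC estimator: squared bias + statistical error
        ((∫ ω, Ql L ω ∂μ) - ∫ ω, Q ω ∂μ) ^ 2 +
          ∑ ℓ ∈ Finset.Icc 1 L,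
            variance (fun ω => Ql ℓ ω - Ql (ℓ - 1) ω) μ / (N ℓ : ℝ) ≤ ε ^ 2 ∧
        -- expected total cost bound
        (∑ ℓ ∈ Finset.Icc 1 L, (N ℓ : ℝ) * C ℓ) ≤
          (if β > γ then c₄ * ε ^ (-2 : ℝ)
           else if β = γ then c₄ * ε ^ (-2 : ℝ) * (Real.log ε) ^ 2
           else c₄ * ε ^ (-2 - (γ - β) / α)) :=
  mlmc_complexity_general μ Q Ql C α β γ c₁ c₂ c₃ hα hγ hc₂ hc₃ hαβγ hbias hvar hcost
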